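/- The tridiagonal matrix L₄ with a = i·α, b = i·β for real α, β with α² + β² > 0 (so all entries are purely imaginary) has four pairwise distinct purely imaginary eigenvalues ±i√(α² + β²) and ±3i√(α² + β²). -/

import Mathlib

/-!
`L₄ = 2 (b S_z + a S_x)` for the spin-3/2 matrices `S_z = diag(3/2, 1/2, -1/2, -3/2)` and `S_x`,
so its spectrum is that of `2 √(a² + b²) S_z`: `±√(a² + b²)` and `±3 √(a² + b²)`.
Algebraically, the characteristic determinant is `(z² - (a² + b²)) (z² - 9 (a² + b²))`, a polynomial
identity in `a`, `b`, `z` and `r = √3` that only uses `r² = 3`. For `a = iα`, `b = iβ` one has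
`a² + b² = (i s)²` with `s = √(α² + β²) > 0`, so the roots are `±i s` and `±3 i s`.
-/

open Matrix Complex

theorem det_symm_tridiagonal_fin_four {R : Type*} [CommRing R] (d₀ d₁ d₂ d₃ e₀ e₁ e₂ : R) :
    det !![d₀, e₀, 0, 0; e₀, d₁, e₁, 0; 0, e₁, d₂, e₂; 0, 0, e₂, d₃] =
      d₀ * d₁ * d₂ * d₃ - d₀ * d₁ * e₂ ^ 2 - d₀ * e₁ ^ 2 * d₃ - e₀ ^ 2 * d₂ * d₃ +
        e₀ ^ 2 * e₂ ^ 2 := by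
  rw [det_succ_row_zero, Fin.sum_univ_four]
  simp only [Fin.coe_ofNat_eq_mod, of_apply, det_fin_three, submatrix_apply, cons_val,
    Fin.reduceSucc, Fin.succAbove, ↓reduceIte, Fin.reduceCastSucc, Fin.reduceLT]
  ring

section SpinThreeHalves

variable {R : Type*} [CommRing R]

/-- `r` plays the role of `√3`. -/
def spinThreeHalvesMatrix (r a b : R) : Matrix (Fin 4) (Fin 4) R :=
  !![3 * b, r * a, 0, 0;
     r * a, b, 2 * a, 0;
     0, 2 * a, -b, r * a;
     0, 0, r * a, -(3 * b)]

theorem det_smul_one_sub_spinThreeHalvesMatrix {r : R} (hr : r ^ 2 = 3) (a b z : R) :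
    det (z • (1 : Matrix (Fin 4) (Fin 4) R) - spinThreeHalvesMatrix r a b) =
      (z ^ 2 - (a ^ 2 + b ^ 2)) * (z ^ 2 - 9 * (a ^ 2 + b ^ 2)) := by
  have hchar : z • 1 - spinThreeHalvesMatrix r a b =
      !![z - 3 * b, -(r * a), 0, 0;
         -(r * a), z - b, -(2 * a), 0;
         0, -(2 * a), z + b, -(r * a);
         0, 0, -(r * a), z + 3 * b] := by
    ext i j
    fin_cases i <;> fin_cases j <;> simp [spinThreeHalvesMatrix, one_apply]
  rw [hchar, det_symm_tridiagonal_fin_four]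
  linear_combination (a ^ 4 * (r ^ 2 + 3) - 2 * a ^ 2 * (z ^ 2 + 3 * b ^ 2)) * hr

theorem det_smul_one_sub_spinThreeHalvesMatrix_eq_prod {r : R} (hr : r ^ 2 = 3) {a b w : R}
    (hw : a ^ 2 + b ^ 2 = w ^ 2) (z : R) :
    det (z • (1 : Matrix (Fin 4) (Fin 4) R) - spinThreeHalvesMatrix r a b) =
      (z - w) * (z + w) * (z - 3 * w) * (z + 3 * w) := by
  rw [det_smul_one_sub_spinThreeHalvesMatrix hr, hw]
  ring

end SpinThreeHalves

theorem sub_mul_add_mul_sub_mul_add_eq_zero_iff {R : Type*} [CommRing R] [NoZeroDivisors R]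
    (w z : R) :
    (z - w) * (z + w) * (z - 3 * w) * (z + 3 * w) = 0 ↔
      z = w ∨ z = -w ∨ z = 3 * w ∨ z = -(3 * w) := by
  simp only [mul_eq_zero, sub_eq_zero, add_eq_zero_iff_eq_neg]
  tauto

theorem pairwise_ne_neg_three_mul {K : Type*} [Field K] [CharZero K] {w : K} (hw : w ≠ 0) :
    [w, -w, 3 * w, -(3 * w)].Pairwise (· ≠ ·) := by
  grind [List.pairwise_cons]

/-- the matrix `L₄` with `a = iα`, `b = iβ`, `α, β ∈ ℝ`,
`α² + β² > 0`, has four pairwise distinct purely imaginary eigenvalues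
`±i√(α²+β²)` and `±3i√(α²+β²)`. -/
theorem stmt19 (α β : ℝ) (hαβ : α ^ 2 + β ^ 2 > 0)
    (a b : ℂ) (haa : a = Complex.I * α) (hbb : b = Complex.I * β)
    (L₄ : Matrix (Fin 4) (Fin 4) ℂ)
    (hL : L₄ = !![3 * b, Real.sqrt 3 * a, 0, 0;
                  Real.sqrt 3 * a, b, 2 * a, 0;
                  0, 2 * a, -b, Real.sqrt 3 * a;
                  0, 0, Real.sqrt 3 * a, -(3 * b)]) :
    ∀ s : ℝ, s = Real.sqrt (α ^ 2 + β ^ 2) →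
      ([Complex.I * s, -(Complex.I * s), 3 * Complex.I * s,
        -(3 * Complex.I * s)] : List ℂ).Pairwise (· ≠ ·) ∧
      (∀ z : ℂ,
        Matrix.det (z • (1 : Matrix (Fin 4) (Fin 4) ℂ) - L₄) = 0 ↔
          z = Complex.I * s ∨ z = -(Complex.I * s)
            ∨ z = 3 * Complex.I * s ∨ z = -(3 * Complex.I * s)) ∧
      (∀ z : ℂ,
        Matrix.det (z • (1 : Matrix (Fin 4) (Fin 4) ℂ) - L₄) = 0 → z.re = 0) := by
  rintro s rfl
  have hsqrt3 : ((√3 : ℝ) : ℂ) ^ 2 = 3 := by norm_cast; simp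
  have hw : a ^ 2 + b ^ 2 = (I * √(α ^ 2 + β ^ 2)) ^ 2 := by
    subst haa hbb
    simp only [mul_pow, I_sq, ← ofReal_pow, Real.sq_sqrt hαβ.le]
    push_cast
    ring
  have hroots (z : ℂ) : det (z • (1 : Matrix (Fin 4) (Fin 4) ℂ) - L₄) = 0 ↔
      z = I * √(α ^ 2 + β ^ 2) ∨ z = -(I * √(α ^ 2 + β ^ 2)) ∨
        z = 3 * (I * √(α ^ 2 + β ^ 2)) ∨ z = -(3 * (I * √(α ^ 2 + β ^ 2))) := by
    rw [show L₄ = spinThreeHalvesMatrix _ a b from hL,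
      det_smul_one_sub_spinThreeHalvesMatrix_eq_prod hsqrt3 hw,
      sub_mul_add_mul_sub_mul_add_eq_zero_iff]
  have hs : (I * √(α ^ 2 + β ^ 2) : ℂ) ≠ 0 := by
    simpa using (Real.sqrt_pos.mpr hαβ).ne'
  simp only [mul_assoc]
  refine ⟨pairwise_ne_neg_three_mul hs, hroots, fun z hz => ?_⟩
  rcases (hroots z).mp hz with rfl | rfl | rfl | rfl <;> simp
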